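/- Let G be a directed graph with edges labeled by letters of A, let v be a vertex of G, and let (p, a, v) and (q, a, v) be two distinct edges of G entering v with the same label a. Let G′ be the graph obtained from G by the Stallings folding identifying the vertices p and q and identifying these two edges. Then for every vertex v₀ of G, the group defined by G′ with respect to the image of v₀ equals the group defined by G with respect to v₀, as subgroups of the free group on A. -/

import Mathlib

open List

variable {A : Type*}

/-- The `n`-th power `wⁿ` of a word (concatenation). -/
def wordPow (w : List A) (n : ℕ) : List A := (List.replicate n w).flatten

/-- A set of words is factorial if it contains the factors of its elements. -/
def Factorial (F : Set (List A)) : Prop := ∀ ⦃u v : List A⦄, u ∈ F → v <:+: u → v ∈ F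

/-- A set of words is recurrent if it is factorial and any two of its words
occur in a common word of the set, in a prescribed order. -/
def Recurrent (F : Set (List A)) : Prop :=
  Factorial F ∧ ∀ u ∈ F, ∀ w ∈ F, ∃ v : List A, u ++ v ++ w ∈ F

/-- A set of words is uniformly recurrent if it is factorial, right-essential, and
every word of the set occurs in all long enough words of the set. -/
def UniformlyRecurrent (F : Set (List A)) : Prop :=
  Factorial F ∧ (∀ w ∈ F, ∃ a : A, w ++ [a] ∈ F) ∧
    ∀ u ∈ F, ∃ n ≥ 1, ∀ w ∈ F, w.length = n → u <:+: w

/-- A set of words is periodic if it is the set of factors of the powers of a single word. -/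
def Periodic (F : Set (List A)) : Prop :=
  ∃ w : List A, F = {v | ∃ n : ℕ, v <:+: wordPow w n}

/-- `L(w)`, the set of left extensions of `w` in `F`. -/
def LeftExt (F : Set (List A)) (w : List A) : Set A := {a | a :: w ∈ F}

/-- `R(w)`, the set of right extensions of `w` in `F`. -/
def RightExt (F : Set (List A)) (w : List A) : Set A := {a | w ++ [a] ∈ F}

/-- A word is left-special if it has at least two left extensions. -/
def LeftSpecial (F : Set (List A)) (w : List A) : Prop := 2 ≤ (LeftExt F w).ncard

/-- A word is right-special if it has at least two right extensions. -/
def RightSpecial (F : Set (List A)) (w : List A) : Prop := 2 ≤ (RightExt F w).ncard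

/-- A word is bispecial if it is both left-special and right-special. -/
def Bispecial (F : Set (List A)) (w : List A) : Prop := LeftSpecial F w ∧ RightSpecial F w

/-- A set of words is biessential if it is factorial and every one of its words is
biextendable. -/
def Biessential (F : Set (List A)) : Prop :=
  Factorial F ∧ ∀ w ∈ F, ∃ a b : A, a :: (w ++ [b]) ∈ F

/-- The bipartite (simple, undirected) graph on `α ⊕ β` induced by a relation
`E : α → β → Prop`. -/
def bipGraph {α β : Type*} (E : α → β → Prop) : SimpleGraph (α ⊕ β) where
  Adj x y := ∃ a b, E a b ∧ ((x = Sum.inl a ∧ y = Sum.inr b) ∨ (x = Sum.inr b ∧ y = Sum.inl a))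
  symm := by
    constructor
    rintro x y ⟨a, b, h, hc⟩
    exact ⟨a, b, h, by tauto⟩
  loopless := by
    constructor
    rintro x ⟨a, b, h, hc⟩
    rcases hc with ⟨h1, h2⟩ | ⟨h1, h2⟩ <;> simp_all

/-- The extension graph `G(w)` of a word `w`: the bipartite graph on
`L(w) ⊔ R(w)` with an edge between `a` and `b` iff `awb ∈ F`. -/
def extensionGraph (F : Set (List A)) (w : List A) :
    SimpleGraph ({a : A // a ∈ LeftExt F w} ⊕ {b : A // b ∈ RightExt F w}) :=
  bipGraph (fun a b => a.1 :: (w ++ [b.1]) ∈ F)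

/-- A tree set: a biessential set all of whose extension graphs are trees. -/
def IsTreeSet (F : Set (List A)) : Prop :=
  Biessential F ∧ ∀ w ∈ F, (extensionGraph F w).IsTree

/-- The generalized extension graph `G_{U,V}(w)`: the bipartite graph on
`U(w) ⊔ V(w)` with an edge between `ℓ` and `r` iff `ℓwr ∈ F`. -/
def genExtGraph (F : Set (List A)) (U V : Set (List A)) (w : List A) :
    SimpleGraph ({l : List A // l ∈ U ∧ l ++ w ∈ F} ⊕ {r : List A // r ∈ V ∧ w ++ r ∈ F}) :=
  bipGraph (fun l r => l.1 ++ w ++ r.1 ∈ F)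

/-- A prefix code: a set of nonempty words none of which is a proper prefix of another. -/
def IsPrefixCode (U : Set (List A)) : Prop :=
  (∀ u ∈ U, u ≠ []) ∧ ∀ u ∈ U, ∀ v ∈ U, u <+: v → u = v

/-- A suffix code: a set of nonempty words none of which is a proper suffix of another. -/
def IsSuffixCode (U : Set (List A)) : Prop :=
  (∀ u ∈ U, u ≠ []) ∧ ∀ u ∈ U, ∀ v ∈ U, u <:+ v → u = v

/-- An `S`-maximal prefix code: a prefix code contained in `S` and not properly contained
in any prefix code contained in `S`. -/
def IsMaximalPrefixCodeIn (S U : Set (List A)) : Prop :=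
  IsPrefixCode U ∧ U ⊆ S ∧ ∀ W, IsPrefixCode W → W ⊆ S → U ⊆ W → U = W

/-- An `S`-maximal suffix code. -/
def IsMaximalSuffixCodeIn (S U : Set (List A)) : Prop :=
  IsSuffixCode U ∧ U ⊆ S ∧ ∀ W, IsSuffixCode W → W ⊆ S → U ⊆ W → U = W

/-- `Γ_F(x)`, the set of right return words to `x` in `F`. -/
def ReturnWords (F : Set (List A)) (x : List A) : Set (List A) :=
  {r | r ≠ [] ∧ x ++ r ∈ F ∧ ∃ s : List A, s ≠ [] ∧ x ++ r = s ++ x}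

/-- `R_F(x) = Γ_F(x) \ Γ_F(x)A⁺`, the set of first right return words to `x` in `F`. -/
def FirstReturnWords (F : Set (List A)) (x : List A) : Set (List A) :=
  ReturnWords F x \ {r | ∃ r' ∈ ReturnWords F x, ∃ s : List A, s ≠ [] ∧ r = r' ++ s}

/-- The natural map from words to the free group. -/
def wordToFree (w : List A) : FreeGroup A := (w.map FreeGroup.of).prod

/-- `x` is unioccurrent in `y` if `x` occurs exactly once in `y`. -/
def Unioccurrent (x y : List A) : Prop := ∃! p : List A × List A, y = p.1 ++ x ++ p.2

/-- Vertices of the Rauzy graph `G_n`: words of `F` of length `n`. -/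
def RauzyVertex (F : Set (List A)) (n : ℕ) := {w : List A // w ∈ F ∧ w.length = n}

/-- Edges of the Rauzy graph `G_n`: an edge from `x` to `y` labeled `a` whenever
`xa ∈ F ∩ Ay`. -/
def RauzyEdge (F : Set (List A)) (n : ℕ) (x : RauzyVertex F n) (a : A)
    (y : RauzyVertex F n) : Prop :=
  x.1 ++ [a] ∈ F ∧ ∃ b : A, x.1 ++ [a] = b :: y.1

/-- `GenPathLabel E p q g` holds when there is a generalized path (a path which may
traverse edges forwards or backwards) from `p` to `q` in the `A`-labeled graph with
edge relation `E`, whose label (product of contributions in the free group) is `g`. -/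
inductive GenPathLabel {V : Type*} (E : V → A → V → Prop) : V → V → FreeGroup A → Prop
  | nil (v : V) : GenPathLabel E v v 1
  | fwd {p q r : V} {g : FreeGroup A} {a : A} :
      GenPathLabel E p q g → E q a r → GenPathLabel E p r (g * FreeGroup.of a)
  | bwd {p q r : V} {g : FreeGroup A} {a : A} :
      GenPathLabel E p q g → E r a q → GenPathLabel E p r (g * (FreeGroup.of a)⁻¹)

/-- A vertex of a Rauzy graph is special if the corresponding word is left-special
or right-special. -/
def SpecialWord (F : Set (List A)) (w : List A) : Prop := LeftSpecial F w ∨ RightSpecial F w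

/-- Nonempty directed paths in the Rauzy graph `G_n` all of whose intermediate
vertices are non-special, together with their labels. -/
inductive NSPath (F : Set (List A)) (n : ℕ) : RauzyVertex F n → RauzyVertex F n → List A → Prop
  | single {p q : RauzyVertex F n} {a : A} : RauzyEdge F n p a q → NSPath F n p q [a]
  | cons {p q r : RauzyVertex F n} {a : A} {l : List A} :
      RauzyEdge F n p a q → ¬ SpecialWord F q.1 → NSPath F n q r l → NSPath F n p r (a :: l)

/-- The Rauzy graph `G_n` is of the first infinite type with respect to the special
vertices `x, y` and the words `u, v, w, t`: `x` and `y` are the only special vertices and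
the simple directed paths between them with non-special intermediate vertices are exactly
`x → x` labeled `u`, `x → y` labeled `v`, `y → y` labeled `w` and `y → x` labeled `t`. -/
def FirstInfiniteType (F : Set (List A)) (n : ℕ) (x y : RauzyVertex F n)
    (u v w t : List A) : Prop :=
  x ≠ y ∧ SpecialWord F x.1 ∧ SpecialWord F y.1 ∧
    (∀ z : RauzyVertex F n, SpecialWord F z.1 → z = x ∨ z = y) ∧
    (∀ p q : RauzyVertex F n, (p = x ∨ p = y) → (q = x ∨ q = y) → ∀ l : List A,
      (NSPath F n p q l ↔ ((p = x ∧ q = x ∧ l = u) ∨ (p = x ∧ q = y ∧ l = v) ∨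
        (p = y ∧ q = y ∧ l = w) ∨ (p = y ∧ q = x ∧ l = t))))


/-!
Every edge of the folded graph lifts to an edge of the original graph, and the endpoints of
consecutive lifted edges, having the same image, are joined by generalized paths of label `1`
in the original graph, since the identified vertices `p` and `q` are joined by the path
`p → v ← q` of label `a a⁻¹`. Splicing these in turns a closed path of the folded graph into
one of the original graph with the same label; the converse is just projecting paths.
-/

/-- Edges form a relation, so edges of `E` with the same label whose endpoints are identified
by `r` (such as the two folded edges) become a single edge. -/
def quotientGraph {B W : Type*} (r : W → W → Prop) (E : W → B → W → Prop) :
    Quot r → B → Quot r → Prop :=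
  fun X b Y => ∃ s u : W, Quot.mk r s = X ∧ Quot.mk r u = Y ∧ E s b u

namespace GenPathLabel

variable {B W : Type*} {E : W → B → W → Prop}

theorem trans {x y z : W} {g h : FreeGroup B}
    (hxy : GenPathLabel E x y g) (hyz : GenPathLabel E y z h) :
    GenPathLabel E x z (g * h) := by
  induction hyz with
  | nil => simpa using hxy
  | fwd _ e ih => simpa [mul_assoc] using ih.fwd e
  | bwd _ e ih => simpa [mul_assoc] using ih.bwd e

theorem symm {x y : W} {g : FreeGroup B} (h : GenPathLabel E x y g) :
    GenPathLabel E y x g⁻¹ := by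
  induction h with
  | nil => simpa using nil _
  | fwd _ e ih => simpa using ((nil _).bwd e).trans ih
  | bwd _ e ih => simpa using ((nil _).fwd e).trans ih

theorem one_of_eqvGen {r : W → W → Prop} (hr : ∀ s u, r s u → GenPathLabel E s u 1)
    {s u : W} (h : Relation.EqvGen r s u) : GenPathLabel E s u 1 := by
  induction h with
  | rel _ _ hsu => exact hr _ _ hsu
  | refl x => exact nil x
  | symm _ _ _ ih => simpa using ih.symm
  | trans _ _ _ _ _ ih₁ ih₂ => simpa using ih₁.trans ih₂

theorem toQuotientGraph (r : W → W → Prop) {x y : W} {g : FreeGroup B}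
    (h : GenPathLabel E x y g) :
    GenPathLabel (quotientGraph r E) (Quot.mk r x) (Quot.mk r y) g := by
  induction h with
  | nil => exact nil _
  | fwd _ e ih => exact ih.fwd ⟨_, _, rfl, rfl, e⟩
  | bwd _ e ih => exact ih.bwd ⟨_, _, rfl, rfl, e⟩

theorem ofQuotientGraph {r : W → W → Prop} (hr : ∀ s u, r s u → GenPathLabel E s u 1)
    {X Y : Quot r} {g : FreeGroup B} (h : GenPathLabel (quotientGraph r E) X Y g)
    {x y : W} (hx : Quot.mk r x = X) (hy : Quot.mk r y = Y) : GenPathLabel E x y g := by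
  have link : ∀ {s u : W}, Quot.mk r s = Quot.mk r u → GenPathLabel E s u 1 :=
    fun hsu => one_of_eqvGen hr (Quot.eq.mp hsu)
  induction h generalizing x y with
  | nil => exact link (hx.trans hy.symm)
  | fwd _ e ih =>
    obtain ⟨s, u, rfl, rfl, he⟩ := e
    simpa using ((ih hx rfl).fwd he).trans (link hy.symm)
  | bwd _ e ih =>
    obtain ⟨s, u, rfl, rfl, he⟩ := e
    simpa using ((ih hx rfl).bwd he).trans (link hy.symm)

end GenPathLabel

theorem genPathLabel_quotientGraph_iff {B W : Type*} {E : W → B → W → Prop}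
    {r : W → W → Prop} (hr : ∀ s u, r s u → GenPathLabel E s u 1) (x y : W)
    (g : FreeGroup B) :
    GenPathLabel (quotientGraph r E) (Quot.mk r x) (Quot.mk r y) g ↔ GenPathLabel E x y g :=
  ⟨fun h => h.ofQuotientGraph hr rfl rfl, fun h => h.toQuotientGraph r⟩

theorem stallings_folding_pathGroup_general {A V : Type*} (E : V → A → V → Prop)
    (p q vv : V) (a : A) (hp : E p a vv) (hq : E q a vv) (v₀ : V) :
    {g : FreeGroup A | GenPathLabel E v₀ v₀ g} =
      {g : FreeGroup A |
        GenPathLabel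
          (fun (X : Quot (fun s u : V => s = p ∧ u = q)) (b : A)
               (Y : Quot (fun s u : V => s = p ∧ u = q)) =>
            ∃ s u : V, Quot.mk _ s = X ∧ Quot.mk _ u = Y ∧ E s b u)
          (Quot.mk _ v₀) (Quot.mk _ v₀) g} := by
  have hfold : ∀ s u, s = p ∧ u = q → GenPathLabel E s u 1 := by
    rintro s u ⟨rfl, rfl⟩
    simpa using ((GenPathLabel.nil s).fwd hp).bwd hq
  ext g
  exact (genPathLabel_quotientGraph_iff hfold v₀ v₀ g).symm

/-- A Stallings folding does not modify the group defined by a labeled graph: if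
`(p, a, vv)` and `(q, a, vv)` are two distinct edges entering `vv` with the same label
`a`, identifying `p` with `q` (and the two edges) yields a graph defining the same
subgroup of the free group with respect to (the image of) any vertex `v₀`. -/
theorem stallings_folding_pathGroup {A V : Type*} (E : V → A → V → Prop)
    (p q vv : V) (a : A) (hpq : p ≠ q) (hp : E p a vv) (hq : E q a vv) (v₀ : V) :
    {g : FreeGroup A | GenPathLabel E v₀ v₀ g} =
      {g : FreeGroup A |
        GenPathLabel
          (fun (X : Quot (fun s u : V => s = p ∧ u = q)) (b : A)
               (Y : Quot (fun s u : V => s = p ∧ u = q)) =>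
            ∃ s u : V, Quot.mk _ s = X ∧ Quot.mk _ u = Y ∧ E s b u)
          (Quot.mk _ v₀) (Quot.mk _ v₀) g} :=
  stallings_folding_pathGroup_general E p q vv a hp hq v₀
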